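/- arXiv:1103.4029 — 3 statements merged into one kernel-verified Lean document; each statement's English description precedes it below -/
import Mathlib

section
/- For all H in (0,1), the quantity ρ(H) = (-3^{2H} + 2^{2H+2} - 7)/(8 - 2^{2H+1}) satisfies -1 < ρ(H) < 1. -/
noncomputable def rhoH (H : ℝ) : ℝ :=
  (-(3:ℝ)^(2*H) + 4*(4:ℝ)^H - 7) / (8 - 2*(4:ℝ)^H)

lemma three_rpow_two_mul (H : ℝ) : (3:ℝ)^(2*H) = (9:ℝ)^H := by
  rw [show (9:ℝ) = (3:ℝ)^(2:ℝ) by norm_num [Real.rpow_two],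
    ← Real.rpow_mul (by norm_num : (0:ℝ) ≤ 3)]

lemma nine_lt (H : ℝ) (h0 : 0 < H) (h1 : H < 1) : (9:ℝ)^H < 2*(4:ℝ)^H + 1 := by
  have h89 : (9:ℝ)^H ≤ (8:ℝ)^H + 1 := by
    have := NNReal.rpow_add_le_add_rpow (8:NNReal) (1:NNReal) h0.le h1.le
    have h' := NNReal.coe_le_coe.mpr this
    push_cast at h'
    norm_num at h'
    linarith
  have h8 : (8:ℝ)^H < 2*(4:ℝ)^H := by
    have e8 : (8:ℝ)^H = (2:ℝ)^(3*H) := by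
      rw [show (8:ℝ) = (2:ℝ)^(3:ℝ) by norm_num [show (3:ℝ) = ((3:ℕ):ℝ) by norm_num,
        Real.rpow_natCast], ← Real.rpow_mul (by norm_num)]
    have e4 : 2*(4:ℝ)^H = (2:ℝ)^(1 + 2*H) := by
      rw [Real.rpow_add (by norm_num), Real.rpow_one,
        show (4:ℝ) = (2:ℝ)^(2:ℝ) by norm_num [Real.rpow_two],
        ← Real.rpow_mul (by norm_num)]
    rw [e8, e4]
    exact Real.rpow_lt_rpow_left_iff (by norm_num) |>.mpr (by linarith)
  linarith

lemma six_lt (H : ℝ) (h0 : 0 < H) (h1 : H < 1) : 6*(4:ℝ)^H < 15 + (9:ℝ)^H := by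
  set c : ℝ := Real.log 9 / Real.log 4 with hc
  have hlog4 : 0 < Real.log 4 := Real.log_pos (by norm_num)
  have hc1 : 1 ≤ c := by
    rw [hc, le_div_iff₀ hlog4, one_mul]
    exact Real.log_le_log (by norm_num) (by norm_num)
  have hc83 : c < 8/3 := by
    rw [hc, div_lt_iff₀ hlog4]
    have h729 : Real.log 729 < Real.log 65536 :=
      Real.log_lt_log (by norm_num) (by norm_num)
    have e1 : Real.log 729 = 3 * Real.log 9 := by
      rw [show (729:ℝ) = 9^(3:ℕ) by norm_num, Real.log_pow]; push_cast; ring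
    have e2 : Real.log 65536 = 8 * Real.log 4 := by
      rw [show (65536:ℝ) = 4^(8:ℕ) by norm_num, Real.log_pow]; push_cast; ring
    nlinarith
  set t : ℝ := (4:ℝ)^H with ht
  have ht4 : t < 4 := by
    have : (4:ℝ)^H < (4:ℝ)^(1:ℝ) :=
      Real.rpow_lt_rpow_left_iff (by norm_num) |>.mpr h1
    simpa using this
  have ht0 : 0 < t := Real.rpow_pos_of_pos (by norm_num) H
  have h4c : (4:ℝ)^c = 9 := Real.rpow_logb (by norm_num) (by norm_num) (by norm_num)
  have h9 : (9:ℝ)^H = t^c := by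
    rw [ht, ← Real.rpow_mul (by norm_num : (0:ℝ) ≤ 4), mul_comm,
      Real.rpow_mul (by norm_num : (0:ℝ) ≤ 4), h4c]
  -- Bernoulli: t^c = 9 * (t/4)^c ≥ 9 * (1 + c*(t/4 - 1))
  have hbern : 9 * (1 + c * (t/4 - 1)) ≤ t^c := by
    have hs : (-1:ℝ) ≤ t/4 - 1 := by linarith
    have := one_add_mul_self_le_rpow_one_add hs hc1
    have h14 : (1 + (t/4 - 1)) = t/4 := by ring
    rw [h14] at this
    have hdiv : (t/4:ℝ)^c = t^c / 9 := by
      rw [Real.div_rpow ht0.le (by norm_num), h4c]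
    rw [hdiv] at this
    linarith
  rw [h9]
  nlinarith [hbern, mul_pos (sub_pos.mpr ht4) (by linarith : (0:ℝ) < 6 - 9*c/4)]

theorem rho_mem_Ioo (H : ℝ) (hH : H ∈ Set.Ioo (0:ℝ) 1) :
    -1 < rhoH H ∧ rhoH H < 1 := by
  obtain ⟨h0, h1⟩ := hH
  have ht4 : (4:ℝ)^H < 4 := by
    have : (4:ℝ)^H < (4:ℝ)^(1:ℝ) :=
      Real.rpow_lt_rpow_left_iff (by norm_num) |>.mpr h1
    simpa using this
  have hD : 0 < 8 - 2*(4:ℝ)^H := by linarith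
  have hA := nine_lt H h0 h1
  have hB := six_lt H h0 h1
  unfold rhoH
  rw [three_rpow_two_mul]
  constructor
  · rw [lt_div_iff₀ hD]; linarith
  · rw [div_lt_one hD]; linarith
end

section
/- The function Λ(H) = (1/π)·arccos(-ρ(H)), where ρ(H) = (-3^{2H} + 2^{2H+2} - 7)/(8 - 2^{2H+1}), is continuous and strictly monotone increasing on (0,1). -/
noncomputable def LambdaH (H : ℝ) : ℝ := Real.arccos (-(rhoH H)) / Real.pi

/-!
With `a = 9^H` and `b = 4^H` one has `ρ(H) = (9 - a) / (2 (4 - b)) - 2`. Putting `s = 4^(H-1)` and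
`k = log_4 9 > 1`, the ratio `(9 - 9^H) / (4 - 4^H)` equals `(9/4) (s^k - 1) / (s - 1)`, a secant
slope through `1` of the strictly convex function `x ↦ x^k`. It therefore increases strictly with `s`,
hence with `H`, and stays below the tangent slope `k < 2` at `1`. So `ρ` is strictly increasing, and
`-1 < -2/3 = ρ(0) < ρ(H) < 9/8 · 2 - 2 < 1` on `(0, 1)`; `Λ(H) = (π - arccos ρ(H)) / π` inherits this.
-/

open Real Set

section SecantSlope

variable {p : ℝ}

theorem strictMonoOn_rpow_secant_one (hp : 1 < p) :
    StrictMonoOn (fun x : ℝ => (x ^ p - 1) / (x - 1)) (Ici 0 \ {1}) := by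
  intro x hx y hy hxy
  simpa using (strictConvexOn_rpow hp).secant_strict_mono (a := 1) (by simp) hx.1 hy.1 hx.2 hy.2 hxy

theorem rpow_secant_one_lt (hp : 1 < p) {x : ℝ} (hx₀ : 0 ≤ x) (hx₁ : x < 1) :
    (x ^ p - 1) / (x - 1) < p := by
  have bernoulli := one_add_mul_self_lt_rpow_one_add (s := x - 1) (by linarith) (by linarith) hp
  rw [add_sub_cancel] at bernoulli
  rw [div_lt_iff_of_neg (by linarith)]
  linarith

end SecantSlope

section RatioOfExponentials

variable {a b : ℝ}

theorem sub_rpow_div_sub_rpow_eq (hb : 0 < b) (hb₁ : b ≠ 1) (ha : 0 < a) {H : ℝ} (hH : b ^ H ≠ b) :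
    (a - a ^ H) / (b - b ^ H)
      = a / b * (((b ^ (H - 1)) ^ logb b a - 1) / (b ^ (H - 1) - 1)) := by
  have hpow : (b ^ (H - 1)) ^ logb b a = a ^ H / a := by
    rw [← rpow_mul hb.le, mul_comm, rpow_mul hb.le, rpow_logb hb hb₁ ha, rpow_sub_one ha.ne']
  rw [hpow, rpow_sub_one hb.ne']
  have : b ^ H - b ≠ 0 := sub_ne_zero.2 hH
  have : b - b ^ H ≠ 0 := sub_ne_zero.2 (Ne.symm hH)
  field_simp
  ring

theorem rpow_ne_self_of_lt_one (hb : 1 < b) {H : ℝ} (hH : H < 1) : b ^ H ≠ b :=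
  ((rpow_lt_rpow_left_iff hb).2 hH).trans_eq (rpow_one b) |>.ne

theorem one_lt_logb_of_lt (hb : 1 < b) (hba : b < a) : 1 < logb b a :=
  (logb_self_eq_one hb).symm.trans_lt (logb_lt_logb hb (by linarith) hba)

theorem sub_rpow_div_sub_rpow_eq_of_lt (hb : 1 < b) (hba : b < a) {H : ℝ} (hH : H < 1) :
    (a - a ^ H) / (b - b ^ H)
      = a / b * (((b ^ (H - 1)) ^ logb b a - 1) / (b ^ (H - 1) - 1)) :=
  sub_rpow_div_sub_rpow_eq (by linarith) hb.ne' (by linarith) (rpow_ne_self_of_lt_one hb hH)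

theorem rpow_sub_one_mem_Ioo (hb : 1 < b) {H : ℝ} (hH : H < 1) : b ^ (H - 1) ∈ Ioo 0 1 :=
  ⟨rpow_pos_of_pos (by linarith) _, rpow_lt_one_of_one_lt_of_neg hb (by linarith)⟩

theorem strictMonoOn_sub_rpow_div_sub_rpow (hb : 1 < b) (hba : b < a) :
    StrictMonoOn (fun H : ℝ => (a - a ^ H) / (b - b ^ H)) (Iio 1) := by
  intro H₁ hH₁ H₂ hH₂ hH
  rw [mem_Iio] at hH₁ hH₂
  have hs : ∀ {H : ℝ}, H < 1 → b ^ (H - 1) ∈ Ici 0 \ {1} := fun hH =>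
    ⟨(rpow_sub_one_mem_Ioo hb hH).1.le, (rpow_sub_one_mem_Ioo hb hH).2.ne⟩
  simp only [sub_rpow_div_sub_rpow_eq_of_lt hb hba hH₁, sub_rpow_div_sub_rpow_eq_of_lt hb hba hH₂]
  refine mul_lt_mul_of_pos_left ?_ (div_pos (by linarith) (by linarith))
  exact strictMonoOn_rpow_secant_one (one_lt_logb_of_lt hb hba) (hs hH₁) (hs hH₂)
    (rpow_lt_rpow_of_exponent_lt hb (by linarith))

theorem sub_rpow_div_sub_rpow_lt (hb : 1 < b) (hba : b < a) {H : ℝ} (hH : H < 1) :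
    (a - a ^ H) / (b - b ^ H) < a / b * logb b a := by
  rw [sub_rpow_div_sub_rpow_eq_of_lt hb hba hH]
  refine mul_lt_mul_of_pos_left ?_ (div_pos (by linarith) (by linarith))
  exact rpow_secant_one_lt (one_lt_logb_of_lt hb hba) (rpow_sub_one_mem_Ioo hb hH).1.le
    (rpow_sub_one_mem_Ioo hb hH).2

end RatioOfExponentials

theorem rhoH_eq_sub_rpow_div_sub_rpow {H : ℝ} (hH : H < 1) :
    rhoH H = (9 - 9 ^ H) / (4 - 4 ^ H) / 2 - 2 := by
  have h9 : (3 : ℝ) ^ (2 * H) = 9 ^ H := by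
    rw [rpow_mul (by norm_num)]
    norm_num
  have h4 : (4 : ℝ) - 4 ^ H ≠ 0 := sub_ne_zero.2 (rpow_ne_self_of_lt_one (by norm_num) hH).symm
  rw [rhoH, h9, show (8 : ℝ) - 2 * 4 ^ H = 2 * (4 - 4 ^ H) by ring]
  field_simp
  ring

theorem rhoH_strictMonoOn : StrictMonoOn rhoH (Iio 1) := by
  intro x hx y hy hxy
  have hratio := strictMonoOn_sub_rpow_div_sub_rpow (a := 9) (by norm_num : (1 : ℝ) < 4) (by norm_num)
    hx hy hxy
  rw [rhoH_eq_sub_rpow_div_sub_rpow hx, rhoH_eq_sub_rpow_div_sub_rpow hy]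
  linarith

theorem continuousOn_rhoH : ContinuousOn rhoH (Iio 1) := by
  refine ContinuousOn.div (by fun_prop (disch := norm_num)) (by fun_prop (disch := norm_num))
    fun H hH => ?_
  have h4 := rpow_ne_self_of_lt_one (by norm_num : (1 : ℝ) < 4) hH
  contrapose! h4
  linarith

theorem rhoH_mem_Ioo {H : ℝ} (hH : H ∈ Ioo 0 1) : rhoH H ∈ Ioo (-1) 1 := by
  have hρ₀ : rhoH 0 = -2 / 3 := by norm_num [rhoH]
  have hlower := rhoH_strictMonoOn (by norm_num : (0 : ℝ) ∈ Iio 1) hH.2 hH.1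
  have hlogb : logb 4 9 < 2 := by
    rw [logb_lt_iff_lt_rpow (by norm_num) (by norm_num)]
    norm_num
  have hupper := sub_rpow_div_sub_rpow_lt (a := 9) (by norm_num : (1 : ℝ) < 4) (by norm_num) hH.2
  refine ⟨by linarith, ?_⟩
  rw [rhoH_eq_sub_rpow_div_sub_rpow hH.2]
  linarith

theorem strictMonoOn_arccos_neg : StrictMonoOn (fun x => arccos (-x)) (Icc (-1) 1) := by
  intro x hx y hy hxy
  simp only [arccos_neg]
  linarith [strictAntiOn_arccos hx hy hxy]

theorem Lambda_continuous_strictMono :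
    ContinuousOn LambdaH (Set.Ioo (0:ℝ) 1) ∧
    StrictMonoOn LambdaH (Set.Ioo (0:ℝ) 1) := by
  have hρ_cont : ContinuousOn rhoH (Ioo 0 1) := continuousOn_rhoH.mono Ioo_subset_Iio_self
  have hρ_mono : StrictMonoOn rhoH (Ioo 0 1) := rhoH_strictMonoOn.mono Ioo_subset_Iio_self
  have harccos_mono : StrictMonoOn (fun H => arccos (-rhoH H)) (Ioo 0 1) :=
    strictMonoOn_arccos_neg.comp hρ_mono fun H hH => Ioo_subset_Icc_self (rhoH_mem_Ioo hH)
  refine ⟨(continuous_arccos.comp_continuousOn hρ_cont.neg).div_const π, ?_⟩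
  intro x hx y hy hxy
  exact div_lt_div_of_pos_right (harccos_mono hx hy hxy) pi_pos
end

section
/- Let B_H be fractional Brownian motion with Hurst index H ∈ (0,1), observed at t_k = k/n, and let ΔB_H(k) = B_H(t_{k+2}) - 2B_H(t_{k+1}) + B_H(t_k). Then the correlation between consecutive second-order increments, Corr(ΔB_H(k), ΔB_H(k+1)), equals ρ(H) = (-3^{2H} + 2^{2H+2} - 7)/(8 - 2^{2H+1}), independently of k and n. -/
open MeasureTheory

lemma integral_expand9 {Ω : Type*} [MeasurableSpace Ω] (μ : Measure Ω)
    (x y z u v w : Ω → ℝ)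
    (hxu : Integrable (fun ω => x ω * u ω) μ)
    (hxv : Integrable (fun ω => x ω * v ω) μ)
    (hxw : Integrable (fun ω => x ω * w ω) μ)
    (hyu : Integrable (fun ω => y ω * u ω) μ)
    (hyv : Integrable (fun ω => y ω * v ω) μ)
    (hyw : Integrable (fun ω => y ω * w ω) μ)
    (hzu : Integrable (fun ω => z ω * u ω) μ)
    (hzv : Integrable (fun ω => z ω * v ω) μ)
    (hzw : Integrable (fun ω => z ω * w ω) μ) :
    ∫ ω, (x ω - 2*y ω + z ω) * (u ω - 2*v ω + w ω) ∂μ =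
      (∫ ω, x ω * u ω ∂μ) - 2*(∫ ω, x ω * v ω ∂μ) + (∫ ω, x ω * w ω ∂μ)
      - 2*(∫ ω, y ω * u ω ∂μ) + 4*(∫ ω, y ω * v ω ∂μ) - 2*(∫ ω, y ω * w ω ∂μ)
      + (∫ ω, z ω * u ω ∂μ) - 2*(∫ ω, z ω * v ω ∂μ) + (∫ ω, z ω * w ω ∂μ) := by
  have I1 : Integrable (fun ω => x ω * u ω - 2*(x ω * v ω)) μ := hxu.sub (hxv.const_mul 2)
  have I2 : Integrable (fun ω => x ω * u ω - 2*(x ω * v ω) + x ω * w ω) μ := I1.add hxw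
  have I3 : Integrable (fun ω => x ω * u ω - 2*(x ω * v ω) + x ω * w ω - 2*(y ω * u ω)) μ :=
    I2.sub (hyu.const_mul 2)
  have I4 : Integrable (fun ω => x ω * u ω - 2*(x ω * v ω) + x ω * w ω - 2*(y ω * u ω)
      + 4*(y ω * v ω)) μ := I3.add (hyv.const_mul 4)
  have I5 : Integrable (fun ω => x ω * u ω - 2*(x ω * v ω) + x ω * w ω - 2*(y ω * u ω)
      + 4*(y ω * v ω) - 2*(y ω * w ω)) μ := I4.sub (hyw.const_mul 2)
  have I6 : Integrable (fun ω => x ω * u ω - 2*(x ω * v ω) + x ω * w ω - 2*(y ω * u ω)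
      + 4*(y ω * v ω) - 2*(y ω * w ω) + z ω * u ω) μ := I5.add hzu
  have I7 : Integrable (fun ω => x ω * u ω - 2*(x ω * v ω) + x ω * w ω - 2*(y ω * u ω)
      + 4*(y ω * v ω) - 2*(y ω * w ω) + z ω * u ω - 2*(z ω * v ω)) μ := I6.sub (hzv.const_mul 2)
  have key : (fun ω => (x ω - 2*y ω + z ω) * (u ω - 2*v ω + w ω))
      = fun ω => x ω * u ω - 2*(x ω * v ω) + x ω * w ω - 2*(y ω * u ω)
        + 4*(y ω * v ω) - 2*(y ω * w ω) + z ω * u ω - 2*(z ω * v ω) + z ω * w ω := by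
    funext ω; ring
  rw [show (∫ ω, (x ω - 2*y ω + z ω) * (u ω - 2*v ω + w ω) ∂μ)
      = ∫ ω, (x ω * u ω - 2*(x ω * v ω) + x ω * w ω - 2*(y ω * u ω)
        + 4*(y ω * v ω) - 2*(y ω * w ω) + z ω * u ω - 2*(z ω * v ω) + z ω * w ω) ∂μ
      from by rw [key],
    integral_add I7 hzw, integral_sub I6 (hzv.const_mul 2), integral_add I5 hzu,
    integral_sub I4 (hyw.const_mul 2), integral_add I3 (hyv.const_mul 4),
    integral_sub I2 (hyu.const_mul 2), integral_add I1 hxw,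
    integral_sub hxu (hxv.const_mul 2)]
  simp only [integral_const_mul]

theorem fBm_second_increment_correlation
    {Ω : Type*} [MeasurableSpace Ω] (μ : Measure Ω) [IsProbabilityMeasure μ]
    (H : ℝ) (hH : H ∈ Set.Ioo (0:ℝ) 1)
    (B : ℝ → Ω → ℝ)
    (hint : ∀ s t : ℝ, Integrable (fun ω => B s ω * B t ω) μ)
    (hcov : ∀ s t : ℝ, 0 ≤ s → 0 ≤ t →
      (∫ ω, B s ω * B t ω ∂μ) = (1/2) * (s^(2*H) + t^(2*H) - |t - s|^(2*H)))
    (n : ℕ) (hn : 1 ≤ n) (k : ℕ)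
    (ΔB : ℕ → Ω → ℝ)
    (hΔ : ΔB = fun j ω => B ((j+2 : ℕ)/(n:ℝ)) ω - 2 * B ((j+1 : ℕ)/(n:ℝ)) ω + B ((j:ℝ)/(n:ℝ)) ω) :
    (∫ ω, ΔB k ω * ΔB (k+1) ω ∂μ) /
      Real.sqrt ((∫ ω, (ΔB k ω)^2 ∂μ) * (∫ ω, (ΔB (k+1) ω)^2 ∂μ)) = rhoH H := by
  have hn0 : (0:ℝ) < n := by exact_mod_cast Nat.lt_of_lt_of_le Nat.zero_lt_one hn
  set N : ℝ := (n:ℝ)^(2*H) with hNdef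
  have hNpos : 0 < N := Real.rpow_pos_of_pos hn0 _
  have h2H : (0:ℝ) < 2*H := by nlinarith [hH.1]
  have key : ∀ a b : ℕ, (∫ ω, B ((a:ℕ)/(n:ℝ)) ω * B ((b:ℕ)/(n:ℝ)) ω ∂μ)
      = (1/2)*(((a:ℝ)/n)^(2*H) + ((b:ℝ)/n)^(2*H) - |(b:ℝ)-a|^(2*H)/N) := by
    intro a b
    rw [hcov _ _ (by positivity) (by positivity)]
    have h1 : |(b:ℝ)/n - (a:ℝ)/n| = |(b:ℝ)-a|/n := by
      rw [div_sub_div_same, abs_div, abs_of_pos hn0]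
    rw [h1, Real.div_rpow (abs_nonneg _) hn0.le]
  have hH2 : (0:ℝ) < H * 2 := mul_pos hH.1 two_pos
  have h24 : (2:ℝ)^(H*2) = (4:ℝ)^H := by
    rw [show (4:ℝ) = (2:ℝ)^(2:ℝ) from by
        rw [show (2:ℝ) = ((2:ℕ):ℝ) from by norm_num, Real.rpow_natCast]; norm_num,
      ← Real.rpow_mul (by norm_num), mul_comm]
  have hC : (∫ ω, ΔB k ω * ΔB (k+1) ω ∂μ)
      = (1/2)*((-(3:ℝ)^(2*H) + 4*(4:ℝ)^H - 7)/N) := by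
    simp only [hΔ]
    rw [integral_expand9 μ _ _ _ _ _ _ (hint _ _) (hint _ _) (hint _ _) (hint _ _) (hint _ _)
      (hint _ _) (hint _ _) (hint _ _) (hint _ _)]
    simp only [key]
    push_cast
    ring_nf
    rw [show |(-1:ℝ)| = 1 from by norm_num, show |(3:ℝ)| = 3 from by norm_num,
      show |(2:ℝ)| = 2 from by norm_num, show |(1:ℝ)| = 1 from by norm_num,
      show |(0:ℝ)| = 0 from by norm_num, Real.one_rpow, Real.zero_rpow hH2.ne', h24]
    ring
  have hVk : (∫ ω, (ΔB k ω)^2 ∂μ) = (4 - (4:ℝ)^H)/N := by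
    simp only [hΔ, pow_two]
    rw [integral_expand9 μ _ _ _ _ _ _ (hint _ _) (hint _ _) (hint _ _) (hint _ _) (hint _ _)
      (hint _ _) (hint _ _) (hint _ _) (hint _ _)]
    simp only [key]
    push_cast
    ring_nf
    rw [show |(-1:ℝ)| = 1 from by norm_num, show |(-2:ℝ)| = 2 from by norm_num,
      show |(2:ℝ)| = 2 from by norm_num, show |(1:ℝ)| = 1 from by norm_num,
      show |(0:ℝ)| = 0 from by norm_num, Real.one_rpow, Real.zero_rpow hH2.ne', h24]
    ring
  have hVk1 : (∫ ω, (ΔB (k+1) ω)^2 ∂μ) = (4 - (4:ℝ)^H)/N := by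
    simp only [hΔ, pow_two]
    rw [integral_expand9 μ _ _ _ _ _ _ (hint _ _) (hint _ _) (hint _ _) (hint _ _) (hint _ _)
      (hint _ _) (hint _ _) (hint _ _) (hint _ _)]
    simp only [key]
    push_cast
    ring_nf
    rw [show |(-1:ℝ)| = 1 from by norm_num, show |(-2:ℝ)| = 2 from by norm_num,
      show |(2:ℝ)| = 2 from by norm_num, show |(1:ℝ)| = 1 from by norm_num,
      show |(0:ℝ)| = 0 from by norm_num, Real.one_rpow, Real.zero_rpow hH2.ne', h24]
    ring
  rw [hC, hVk, hVk1]
  have h4H : (4:ℝ)^H < 4 := by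
    calc (4:ℝ)^H < 4^(1:ℝ) := Real.rpow_lt_rpow_of_exponent_lt (by norm_num) hH.2
    _ = 4 := Real.rpow_one 4
  have hVpos : (0:ℝ) < (4 - (4:ℝ)^H)/N := by
    apply div_pos (by linarith) hNpos
  rw [Real.sqrt_mul_self hVpos.le]
  rw [rhoH]
  rw [div_eq_div_iff (by positivity) (by nlinarith)]
  field_simp
  ring
end
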